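/- For every natural number k and every ε > 0 there exists ν = (2k+3)²/ε such that for every cover U of a metric space X of multiplicity at most k+1 with Lebesgue number greater than ν, the canonical projection p : X → Nerve(U) ⊂ l²(U), defined by the partition of unity φ_U(x) = d(x, X\U) / Σ_{V∈U} d(x, X\V), is ε-Lipschitz. -/

import Mathlib

/-!
Put `f_U = d(·, X \ U)`, so `φ_U = f_U / S` with `S = Σ_V f_V`. Each `f_U` is 1-Lipschitz, and by
the multiplicity bound at most `2k + 2` of the `f_U` are nonzero at `x` or at `y`; hence
`|S(x) - S(y)| ≤ (2k + 2) d(x, y)`, while the Lebesgue number gives `S > ν`. Together these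
bound every coordinate difference `|φ_U(x) - φ_U(y)|` by `(2k + 3) d(x, y) / ν`, and summing the
squares of at most `2k + 2` such terms gives at most `(2k + 3)⁴ (d(x, y) / ν)² = (ε d(x, y))²`.
-/

open Metric Set

/-- A family of subsets covers `X`. -/
def IsCover {X : Type*} [MetricSpace X] (𝔘 : Set (Set X)) : Prop :=
  ∀ x : X, ∃ U ∈ 𝔘, x ∈ U

/-- A cover has multiplicity (order) at most `m` if every point lies in at most `m`
members of the cover. -/
def MultLE {X : Type*} [MetricSpace X] (m : ℕ) (𝔘 : Set (Set X)) : Prop :=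
  ∀ x : X, {U | U ∈ 𝔘 ∧ x ∈ U}.encard ≤ (m : ℕ∞)

/-- The cover has Lebesgue number greater than `d`: for every point there is a member `U`
whose complement is at distance greater than `d`. -/
def LebesgueGT {X : Type*} [MetricSpace X] (d : ℝ) (𝔘 : Set (Set X)) : Prop :=
  ∀ x : X, ∃ U ∈ 𝔘, d < Metric.infDist x Uᶜ

/-- The partition of unity `φ_U(x) = d(x, X\U) / Σ_{V ∈ 𝔘} d(x, X\V)` defining the
canonical projection to the nerve of the cover `𝔘` (the barycentric coordinate of `p(x)`
at the vertex `U` of the nerve, realized in `ℓ²(𝔘)`). -/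
noncomputable def nervePhi {X : Type*} [MetricSpace X] (𝔘 : Set (Set X)) (U : Set X)
    (x : X) : ℝ :=
  Metric.infDist x Uᶜ / ∑' V : 𝔘, Metric.infDist x (V : Set X)ᶜ

open Finset

section NormalizedDifference

variable {ι : Type*} {s : Finset ι} {a b : ι → ℝ} {d ν : ℝ}

theorem abs_sum_sub_sum_le (hab : ∀ i ∈ s, |a i - b i| ≤ d) :
    |∑ i ∈ s, a i - ∑ i ∈ s, b i| ≤ #s * d := by
  rw [← sum_sub_distrib, ← nsmul_eq_mul]
  exact (abs_sum_le_sum_abs _ _).trans (sum_le_card_nsmul _ _ _ hab)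

theorem abs_div_sum_sub_div_sum_le (hb : ∀ i ∈ s, 0 ≤ b i) (hab : ∀ i ∈ s, |a i - b i| ≤ d)
    (hν : 0 < ν) (hνa : ν ≤ ∑ j ∈ s, a j) (hνb : ν ≤ ∑ j ∈ s, b j) {i : ι} (hi : i ∈ s) :
    |a i / ∑ j ∈ s, a j - b i / ∑ j ∈ s, b j| ≤ (#s + 1) * d / ν := by
  set A := ∑ j ∈ s, a j
  set B := ∑ j ∈ s, b j
  have hA : 0 < A := hν.trans_le hνa
  have hB : 0 < B := hν.trans_le hνb
  have hd : 0 ≤ d := (abs_nonneg _).trans (hab i hi)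
  have hbB : b i ≤ B := single_le_sum hb hi
  have hnum : |a i * B - A * b i| ≤ (#s + 1) * d * B :=
    calc |a i * B - A * b i| = |(a i - b i) * B + b i * (B - A)| := by ring_nf
      _ ≤ |(a i - b i) * B| + |b i * (B - A)| := abs_add_le _ _
      _ = |a i - b i| * B + b i * |A - B| := by
        rw [abs_mul, abs_mul, abs_of_pos hB, abs_of_nonneg (hb i hi), abs_sub_comm B]
      _ ≤ d * B + B * (#s * d) := by
        gcongr
        · exact hab i hi
        · exact abs_sum_sub_sum_le hab
      _ = (#s + 1) * d * B := by ring
  calc |a i / A - b i / B| = |a i * B - A * b i| / (A * B) := by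
        rw [div_sub_div _ _ hA.ne' hB.ne', abs_div, abs_of_pos (mul_pos hA hB)]
    _ ≤ (#s + 1) * d * B / (A * B) := by gcongr
    _ = (#s + 1) * d / A := by field_simp
    _ ≤ (#s + 1) * d / ν := by gcongr

theorem sum_sq_div_sum_sub_div_sum_le (hb : ∀ i ∈ s, 0 ≤ b i)
    (hab : ∀ i ∈ s, |a i - b i| ≤ d) (hν : 0 < ν) (hνa : ν ≤ ∑ j ∈ s, a j)
    (hνb : ν ≤ ∑ j ∈ s, b j) :
    ∑ i ∈ s, (a i / ∑ j ∈ s, a j - b i / ∑ j ∈ s, b j) ^ 2 ≤ #s * ((#s + 1) * d / ν) ^ 2 := by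
  rw [← nsmul_eq_mul]
  refine sum_le_card_nsmul _ _ _ fun i hi => sq_le_sq.2 ?_
  exact (abs_div_sum_sub_div_sum_le hb hab hν hνa hνb hi).trans (le_abs_self _)

end NormalizedDifference

theorem card_mul_sq_le_of_le {n k : ℕ} (hn : n ≤ 2 * k + 2) (t : ℝ) :
    (n : ℝ) * ((n + 1) * t) ^ 2 ≤ ((2 * k + 3) ^ 2 * t) ^ 2 := by
  have hn' : (n : ℝ) ≤ 2 * k + 2 := by exact_mod_cast hn
  have hcoef : (n : ℝ) * (n + 1) ^ 2 ≤ ((2 * k + 3) ^ 2) ^ 2 :=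
    calc (n : ℝ) * (n + 1) ^ 2 ≤ (2 * (k : ℝ) + 3) * (2 * k + 3) ^ 2 :=
        mul_le_mul (by linarith) (pow_le_pow_left₀ (by positivity) (by linarith) 2) (by positivity)
          (by positivity)
      _ ≤ (2 * (k : ℝ) + 3) ^ 2 * (2 * k + 3) ^ 2 := by gcongr; nlinarith
      _ = ((2 * (k : ℝ) + 3) ^ 2) ^ 2 := by ring
  rw [mul_pow, mul_pow, ← mul_assoc]
  gcongr

section NerveCoordinates

variable {X : Type*} [MetricSpace X] {𝔘 : Set (Set X)} {s : Finset 𝔘} {z : X}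

theorem MultLE.exists_finset {m : ℕ} (h : MultLE m 𝔘) (z : X) :
    ∃ s : Finset 𝔘, #s ≤ m ∧ ∀ U : 𝔘, z ∈ (U : Set X) → U ∈ s := by
  classical
  obtain ⟨hfin, hcard⟩ := encard_le_coe_iff_finite_ncard_le.1 (h z)
  refine ⟨hfin.toFinset.subtype (· ∈ 𝔘), ?_, fun U hU => by simpa using And.intro U.2 hU⟩
  calc #(hfin.toFinset.subtype (· ∈ 𝔘)) ≤ #hfin.toFinset := by
        rw [card_subtype]; exact card_filter_le _ _
    _ = _ := (ncard_eq_toFinset_card _ hfin).symm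
    _ ≤ m := hcard

theorem tsum_infDist_compl_eq_sum (hs : ∀ U : 𝔘, z ∈ (U : Set X) → U ∈ s) :
    ∑' V : 𝔘, infDist z (V : Set X)ᶜ = ∑ V ∈ s, infDist z (V : Set X)ᶜ :=
  tsum_eq_sum fun V hV => infDist_zero_of_mem fun hz => hV (hs V hz)

theorem nervePhi_eq_div_sum (hs : ∀ U : 𝔘, z ∈ (U : Set X) → U ∈ s) (U : Set X) :
    nervePhi 𝔘 U z = infDist z Uᶜ / ∑ V ∈ s, infDist z (V : Set X)ᶜ := by
  rw [nervePhi, tsum_infDist_compl_eq_sum hs]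

theorem nervePhi_eq_zero_of_notMem {U : Set X} (hz : z ∉ U) : nervePhi 𝔘 U z = 0 := by
  rw [nervePhi, infDist_zero_of_mem (show z ∈ Uᶜ from hz), zero_div]

theorem LebesgueGT.lt_sum_infDist_compl {ν : ℝ} (h : LebesgueGT ν 𝔘)
    (hs : ∀ U : 𝔘, z ∈ (U : Set X) → U ∈ s) : ν < ∑ V ∈ s, infDist z (V : Set X)ᶜ := by
  obtain ⟨U, hU𝔘, hν⟩ := h z
  by_cases hzU : z ∈ U
  · have hmem : (⟨U, hU𝔘⟩ : 𝔘) ∈ s := hs _ hzU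
    have hterm := single_le_sum (f := fun V : 𝔘 => infDist z (V : Set X)ᶜ)
      (fun V _ => infDist_nonneg (x := z) (s := (V : Set X)ᶜ)) hmem
    exact hν.trans_le hterm
  · rw [infDist_zero_of_mem (show z ∈ Uᶜ from hzU)] at hν
    exact hν.trans_le (sum_nonneg fun _ _ => infDist_nonneg)

end NerveCoordinates

/-- For every `k` and every `ε > 0` there is `ν = (2k+3)²/ε` such that for every cover `𝔘`
of a metric space `X` of multiplicity at most `k+1` with Lebesgue number greater than `ν`,
the canonical projection to the nerve is `ε`-Lipschitz (as a map into `ℓ²(𝔘)`, i.e. the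
squared `ℓ²`-distance of the barycentric coordinates is at most `(ε · d(x,y))²`). -/
theorem canonical_projection_lipschitz (k : ℕ) (ε : ℝ) (hε : 0 < ε) :
    ∃ ν : ℝ, ν = (2 * (k : ℝ) + 3) ^ 2 / ε ∧
      ∀ (X : Type) [MetricSpace X] (𝔘 : Set (Set X)),
        IsCover 𝔘 → MultLE (k + 1) 𝔘 → LebesgueGT ν 𝔘 →
        ∀ x y : X,
          ∑' U : 𝔘, (nervePhi 𝔘 U x - nervePhi 𝔘 U y) ^ 2 ≤ (ε * dist x y) ^ 2 := by
  refine ⟨_, rfl, fun X _ 𝔘 _ hmult hleb x y => ?_⟩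
  have hν : 0 < (2 * (k : ℝ) + 3) ^ 2 / ε := by positivity
  obtain ⟨sx, hsx, hx⟩ := hmult.exists_finset x
  obtain ⟨sy, hsy, hy⟩ := hmult.exists_finset y
  have hxs : ∀ U : 𝔘, x ∈ (U : Set X) → U ∈ sx ∪ sy := fun U h => mem_union_left _ (hx U h)
  have hys : ∀ U : 𝔘, y ∈ (U : Set X) → U ∈ sx ∪ sy := fun U h => mem_union_right _ (hy U h)
  have hvanish : ∀ U ∉ sx ∪ sy, (nervePhi 𝔘 U x - nervePhi 𝔘 U y) ^ 2 = 0 := fun U hU => by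
    rw [nervePhi_eq_zero_of_notMem (mt (hxs U) hU), nervePhi_eq_zero_of_notMem (mt (hys U) hU)]
    ring
  have hlip : ∀ U : 𝔘, |infDist x (U : Set X)ᶜ - infDist y (U : Set X)ᶜ| ≤ dist x y := fun U => by
    simpa [Real.dist_eq] using (lipschitz_infDist_pt (U : Set X)ᶜ).dist_le_mul x y
  rw [tsum_eq_sum hvanish]
  simp_rw [nervePhi_eq_div_sum hxs, nervePhi_eq_div_sum hys]
  refine (sum_sq_div_sum_sub_div_sum_le (fun _ _ => infDist_nonneg) (fun U _ => hlip U) hν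
    (hleb.lt_sum_infDist_compl hxs).le (hleb.lt_sum_infDist_compl hys).le).trans ?_
  have hεd : ε * dist x y = (2 * (k : ℝ) + 3) ^ 2 * (dist x y / ((2 * (k : ℝ) + 3) ^ 2 / ε)) := by
    field_simp
  rw [hεd, mul_div_assoc]
  exact card_mul_sq_le_of_le ((card_union_le sx sy).trans (by omega)) _
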